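/- If Q is an m×m row graded matrix (each row nondecreasing) and T⁰ is the lexicographically smallest spanning tree of a connected graph G on edges e_1,...,e_m, then for every i, T⁰ minimizes Σ_{e_j∈T} q(i,j) over all spanning trees T; i.e., a single tree simultaneously solves all m row-wise minimum spanning tree problems. -/

import Mathlib

/-- A spanning tree of the multigraph on vertex set `V` with edges `e_1,…,e_m` given by
`ends : Fin m → Sym2 V`. -/
def IsSpanningTree {V : Type*} [Fintype V] {m : ℕ} (ends : Fin m → Sym2 V)
    (T : Finset (Fin m)) : Prop :=
  T.card + 1 = Fintype.card V ∧
    ∀ u v : V, Relation.ReflTransGen (fun a b => ∃ e ∈ T, ends e = s(a, b)) u v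

/-!
The lexicographically smallest spanning tree `T⁰` is greedy-optimal: for every threshold `x`,
no spanning tree `T` has more edges of index `≤ x` than `T⁰`. Indeed, a subset `J` of a
spanning tree satisfies `#components(J) + #J = |V|`, while every edge set `I` has
`#components(I) + #I ≥ |V|`; so if `T ∩ [0, x]` is larger than `I = T⁰ ∩ [0, x]`, one of its
edges `f ≤ x` joins two components of `I`. Exchanging `f` into `T⁰` against edges of `T⁰`
outside `I`, all of index `> x`, gives a lexicographically smaller spanning tree. Hence the
`k`-th smallest edge of `T⁰` is at most the `k`-th smallest edge of `T`, and a nondecreasing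
row sums to less over `T⁰`.
-/

open Finset

theorem List.exists_lt_of_lex_of_mem_of_notMem {α : Type*} [LinearOrder α]
    {l₁ l₂ : List α} (h₁ : l₁.Pairwise (· < ·)) (h₂ : l₂.Pairwise (· < ·))
    (hlex : List.Lex (· < ·) l₁ l₂) {b : α} (hb₂ : b ∈ l₂) (hb₁ : b ∉ l₁) :
    l₁ <+: l₂ ∨ ∃ a ∈ l₁, a ∉ l₂ ∧ a < b := by
  induction hlex with
  | nil => exact .inl List.nil_prefix
  | @rel a l₁ c l₂ hac =>
    have hcb : c ≤ b := by
      rcases List.mem_cons.1 hb₂ with rfl | hb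
      · rfl
      · exact (List.rel_of_pairwise_cons h₂ hb).le
    refine .inr ⟨a, List.mem_cons_self, fun ha => ?_, hac.trans_le hcb⟩
    rcases List.mem_cons.1 ha with rfl | ha
    · exact lt_irrefl _ hac
    · exact lt_asymm hac (List.rel_of_pairwise_cons h₂ ha)
  | @cons a l₁ l₂ _ ih =>
    have hb : b ∈ l₂ :=
      (List.mem_cons.1 hb₂).resolve_left fun h => hb₁ (h ▸ List.mem_cons_self)
    rcases ih h₁.of_cons h₂.of_cons hb (fun h => hb₁ (List.mem_cons_of_mem _ h)) with
      hpre | ⟨a', ha', ha'₂, hlt⟩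
    · exact .inl (List.cons_prefix_cons.2 ⟨rfl, hpre⟩)
    · refine .inr ⟨a', List.mem_cons_of_mem _ ha', ?_, hlt⟩
      rintro (_ | ⟨_, ha'₂'⟩)
      · exact lt_irrefl _ (List.rel_of_pairwise_cons h₁ ha')
      · exact ha'₂ ha'₂'

theorem Finset.exists_lt_of_lex_sort {α : Type*} [LinearOrder α] {A B : Finset α}
    (hlex : List.Lex (· < ·) (A.sort (· ≤ ·)) (B.sort (· ≤ ·))) (hcard : #B ≤ #A)
    {b : α} (hbB : b ∈ B) (hbA : b ∉ A) : ∃ a ∈ A, a ∉ B ∧ a < b := by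
  rcases List.exists_lt_of_lex_of_mem_of_notMem (A.sortedLT_sort.pairwise)
    (B.sortedLT_sort.pairwise) hlex (by simpa using hbB) (by simpa using hbA) with
    hpre | ⟨a, ha, haB, hab⟩
  · have hAB : A ⊆ B := fun x hx => by simpa using hpre.subset (by simpa using hx)
    exact absurd (eq_of_subset_of_card_le hAB hcard ▸ hbB) hbA
  · exact ⟨a, by simpa using ha, by simpa using haB, hab⟩

theorem Finset.orderEmbOfFin_le_of_card_filter_le {α : Type*} [LinearOrder α]
    {A B : Finset α} {n : ℕ} (hA : #A = n) (hB : #B = n)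
    (hdom : ∀ x, #(B.filter (· ≤ x)) ≤ #(A.filter (· ≤ x))) (i : Fin n) :
    A.orderEmbOfFin hA i ≤ B.orderEmbOfFin hB i := by
  by_contra! hlt
  set y := B.orderEmbOfFin hB i
  have hB_ge : i.val + 1 ≤ #(B.filter (· ≤ y)) := by
    rw [← Fin.card_Iic, ← card_map (B.orderEmbOfFin hB).toEmbedding]
    refine card_le_card fun x hx => ?_
    obtain ⟨j, hj, rfl⟩ := mem_map.1 hx
    exact mem_filter.2 ⟨orderEmbOfFin_mem _ _ _, (B.orderEmbOfFin hB).monotone (mem_Iic.1 hj)⟩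
  have hA_le : #(A.filter (· ≤ y)) ≤ i.val := by
    rw [← Fin.card_Iio i, ← card_map (A.orderEmbOfFin hA).toEmbedding]
    refine card_le_card fun x hx => ?_
    obtain ⟨hxA, hxy⟩ := mem_filter.1 hx
    obtain ⟨j, rfl⟩ : x ∈ Set.range (A.orderEmbOfFin hA) := by simpa using hxA
    refine mem_map_of_mem _ (mem_Iio.2 (lt_of_not_ge fun hij => ?_))
    exact (hxy.trans_lt hlt).not_ge ((A.orderEmbOfFin hA).monotone hij)
  have := hdom y
  omega

theorem Finset.sum_le_sum_of_card_filter_le {α β : Type*} [LinearOrder α]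
    [AddCommMonoid β] [PartialOrder β] [IsOrderedAddMonoid β] {A B : Finset α} {g : α → β}
    (hg : Monotone g) (hcard : #A = #B)
    (hdom : ∀ x, #(B.filter (· ≤ x)) ≤ #(A.filter (· ≤ x))) :
    ∑ j ∈ A, g j ≤ ∑ j ∈ B, g j := by
  rw [← map_orderEmbOfFin_univ A rfl, ← map_orderEmbOfFin_univ B hcard.symm, sum_map, sum_map]
  exact sum_le_sum fun i _ => hg (orderEmbOfFin_le_of_card_filter_le rfl hcard.symm hdom i)

namespace EdgeFamily

variable {V ι : Type*} {ends : ι → Sym2 V}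

def Reachable (ends : ι → Sym2 V) (S : Finset ι) : V → V → Prop :=
  Relation.ReflTransGen fun a b => ∃ e ∈ S, ends e = s(a, b)

variable {S S' : Finset ι} {a b x y : V}

theorem reachable_of_mem {e : ι} (he : e ∈ S) (hab : ends e = s(a, b)) :
    Reachable ends S a b :=
  .single ⟨e, he, hab⟩

theorem Reachable.symm (h : Reachable ends S a b) : Reachable ends S b a :=
  Relation.ReflTransGen.mono (fun _ _ ⟨e, he, hab⟩ => ⟨e, he, hab.trans Sym2.eq_swap⟩) _ _
    (Relation.ReflTransGen.swap _ _ h)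

theorem Reachable.trans (h : Reachable ends S a b) (h' : Reachable ends S b x) :
    Reachable ends S a x :=
  Relation.ReflTransGen.trans h h'

theorem Reachable.of_forall_edge
    (hS : ∀ e ∈ S, ∀ u v, ends e = s(u, v) → Reachable ends S' u v)
    (h : Reachable ends S x y) : Reachable ends S' x y := by
  induction h with
  | refl => exact .refl
  | tail _ hstep ih =>
    obtain ⟨e, he, huv⟩ := hstep
    exact ih.trans (hS e he _ _ huv)

theorem Reachable.mono (hSS' : S ⊆ S') (h : Reachable ends S x y) : Reachable ends S' x y :=
  h.of_forall_edge fun _ he _ _ huv => reachable_of_mem (hSS' he) huv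

theorem Reachable.of_insert [DecidableEq ι] {f : ι} (hf : ends f = s(a, b))
    (h : Reachable ends (insert f S) x y) :
    Reachable ends S x y ∨ (Reachable ends S x a ∧ Reachable ends S b y) ∨
      (Reachable ends S x b ∧ Reachable ends S a y) := by
  induction h with
  | refl => exact .inl .refl
  | @tail u w _ hstep ih =>
    obtain ⟨e, he, huw⟩ := hstep
    rcases mem_insert.1 he with rfl | he
    · rcases Sym2.eq_iff.1 (hf.symm.trans huw) with ⟨rfl, rfl⟩ | ⟨rfl, rfl⟩
      · rcases ih with h | ⟨h, _⟩ | ⟨h, _⟩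
        exacts [.inr (.inl ⟨h, .refl⟩), .inr (.inl ⟨h, .refl⟩), .inl h]
      · rcases ih with h | ⟨h, _⟩ | ⟨h, _⟩
        exacts [.inr (.inr ⟨h, .refl⟩), .inl h, .inr (.inr ⟨h, .refl⟩)]
    · have hstep : Reachable ends S u w := reachable_of_mem he huw
      rcases ih with h | ⟨h₁, h₂⟩ | ⟨h₁, h₂⟩
      exacts [.inl (h.trans hstep), .inr (.inl ⟨h₁, h₂.trans hstep⟩),
        .inr (.inr ⟨h₁, h₂.trans hstep⟩)]

def reachableSetoid (ends : ι → Sym2 V) (S : Finset ι) : Setoid V where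
  r := Reachable ends S
  iseqv := ⟨fun _ => .refl, Reachable.symm, Reachable.trans⟩

noncomputable def numComponents (ends : ι → Sym2 V) (S : Finset ι) : ℕ :=
  Nat.card (Quotient (reachableSetoid ends S))

section Finite

variable [Finite V]

theorem numComponents_le_of_reachable
    (h : ∀ x y, Reachable ends S x y → Reachable ends S' x y) :
    numComponents ends S' ≤ numComponents ends S :=
  Nat.card_le_card_of_surjective (Quotient.map id h) fun q =>
    q.inductionOn fun x => ⟨⟦x⟧, rfl⟩

theorem numComponents_le_one (h : ∀ x y, Reachable ends S x y) : numComponents ends S ≤ 1 :=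
  Finite.card_le_one_iff_subsingleton.2
    ⟨fun p q => p.inductionOn₂ q fun x y => Quotient.sound (h x y)⟩

-- Sending the component of one endpoint of `f` to `none` gives an injection into
-- `Option` of the components after inserting `f`.
theorem numComponents_le_numComponents_insert_add_one [DecidableEq ι] (f : ι) :
    numComponents ends S ≤ numComponents ends (insert f S) + 1 := by
  classical
  obtain ⟨⟨a, b⟩, hab⟩ := Quot.exists_rep (ends f)
  have hf : ends f = s(a, b) := hab.symm
  let φ : Quotient (reachableSetoid ends S) →
      Option (Quotient (reachableSetoid ends (insert f S))) :=
    Quotient.lift (fun x => if Reachable ends S x b then none else some ⟦x⟧) fun x y hxy => by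
      by_cases hx : Reachable ends S x b
      · simp [hx, (hxy.symm.trans hx : Reachable ends S y b)]
      · have hy : ¬Reachable ends S y b := fun hy => hx (hxy.trans hy)
        simp only [hx, hy, if_false, Option.some.injEq]
        exact Quotient.sound (hxy.mono (subset_insert f S))
  have hφ : Function.Injective φ := by
    refine fun p q => p.inductionOn₂ q fun x y hxy => Quotient.sound ?_
    by_cases hx : Reachable ends S x b <;> by_cases hy : Reachable ends S y b <;>
      simp only [φ, Quotient.lift_mk, hx, hy, if_true, if_false, reduceCtorEq,
        Option.some.injEq] at hxy
    · exact hx.trans hy.symm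
    · rcases (Quotient.exact hxy : Reachable ends (insert f S) x y).of_insert hf with
        h | ⟨_, h⟩ | ⟨h, _⟩
      exacts [h, absurd h.symm hy, absurd h hx]
  rw [numComponents, numComponents, ← Finite.card_option]
  exact Nat.card_le_card_of_injective φ hφ

theorem numComponents_le_numComponents_union_add_card [DecidableEq ι] (A : Finset ι) :
    numComponents ends S ≤ numComponents ends (A ∪ S) + #A := by
  induction A using Finset.induction_on with
  | empty => simp
  | @insert f A hfA ih =>
    rw [insert_union, card_insert_of_notMem hfA]
    have := numComponents_le_numComponents_insert_add_one (ends := ends) (S := A ∪ S) f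
    omega

end Finite

variable [Fintype V]

theorem card_le_numComponents_empty : Fintype.card V ≤ numComponents ends (∅ : Finset ι) := by
  rw [numComponents, ← Nat.card_eq_fintype_card]
  refine Nat.card_le_card_of_injective (Quotient.mk _) fun x y hxy => ?_
  induction (Quotient.exact hxy : Reachable ends ∅ x y) with
  | refl => rfl
  | tail _ hstep => simp at hstep

theorem card_le_numComponents_add_card [DecidableEq ι] (S : Finset ι) :
    Fintype.card V ≤ numComponents ends S + #S := by
  simpa using card_le_numComponents_empty.trans
    (numComponents_le_numComponents_union_add_card (ends := ends) (S := ∅) S)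

end EdgeFamily

open EdgeFamily

section

variable {V : Type*} [Fintype V] {m : ℕ} {ends : Fin m → Sym2 V} {T I J : Finset (Fin m)}

theorem IsSpanningTree.reachable (hT : IsSpanningTree ends T) (u v : V) :
    Reachable ends T u v :=
  hT.2 u v

theorem IsSpanningTree.card_eq {T' : Finset (Fin m)} (hT : IsSpanningTree ends T)
    (hT' : IsSpanningTree ends T') : #T = #T' := by
  have := hT.1
  have := hT'.1
  omega

theorem IsSpanningTree.numComponents_add_card_of_subset (hT : IsSpanningTree ends T)
    (hJT : J ⊆ T) : numComponents ends J + #J = Fintype.card V := by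
  have hlower := card_le_numComponents_add_card (ends := ends) J
  have hupper := numComponents_le_numComponents_union_add_card (ends := ends) (S := J) (T \ J)
  rw [sdiff_union_of_subset hJT, card_sdiff_of_subset hJT] at hupper
  have hconn : numComponents ends T ≤ 1 := numComponents_le_one hT.reachable
  have := card_le_card hJT
  have := hT.1
  omega

theorem IsSpanningTree.exists_edge_not_reachable_of_card_lt (hT : IsSpanningTree ends T)
    (hJT : J ⊆ T) (hcard : #I < #J) :
    ∃ f ∈ J, ∃ a b, ends f = s(a, b) ∧ ¬Reachable ends I a b := by
  by_contra! h
  have hcomp : numComponents ends I ≤ numComponents ends J :=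
    numComponents_le_of_reachable fun _ _ => Reachable.of_forall_edge h
  have := card_le_numComponents_add_card (ends := ends) I
  have := hT.numComponents_add_card_of_subset hJT
  omega

-- Take `S` maximal with `I ⊆ S ⊆ T` not joining `a` and `b`: every edge of `T \ S` then lies
-- on a cycle through `f` in `insert f S`, so `insert f S` is spanning.
theorem IsSpanningTree.exists_insert_isSpanningTree (hT : IsSpanningTree ends T) (hIT : I ⊆ T)
    {f : Fin m} {a b : V} (hf : ends f = s(a, b)) (hab : ¬Reachable ends I a b) :
    ∃ S, I ⊆ S ∧ S ⊆ T ∧ IsSpanningTree ends (insert f S) := by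
  classical
  obtain ⟨S, hS, hmax⟩ := exists_max_image
    (T.powerset.filter fun S => I ⊆ S ∧ ¬Reachable ends S a b) card ⟨I, by simp [hIT, hab]⟩
  simp only [mem_filter, mem_powerset] at hS
  obtain ⟨hST, hIS, hSab⟩ := hS
  have hclose : ∀ e ∈ T, e ∉ S → Reachable ends (insert e S) a b := fun e he heS => by
    by_contra h
    have := hmax (insert e S)
      (mem_filter.2 ⟨mem_powerset.2 (insert_subset he hST), hIS.trans (subset_insert e S), h⟩)
    rw [card_insert_of_notMem heS] at this
    omega
  have hsub : S ⊆ insert f S := subset_insert f S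
  have hfab : Reachable ends (insert f S) a b := reachable_of_mem (mem_insert_self f S) hf
  have hspan : ∀ u v, Reachable ends (insert f S) u v := fun u v =>
    (hT.reachable u v).of_forall_edge fun e he d₁ d₂ hd => by
      by_cases heS : e ∈ S
      · exact reachable_of_mem (mem_insert_of_mem heS) hd
      rcases (hclose e he heS).of_insert hd with h | ⟨h₁, h₂⟩ | ⟨h₁, h₂⟩
      · exact absurd h hSab
      · exact (h₁.symm.mono hsub).trans (hfab.trans (h₂.symm.mono hsub))
      · exact (h₂.mono hsub).trans (hfab.symm.trans (h₁.mono hsub))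
  have hST' : #S < #T :=
    card_lt_card (ssubset_of_subset_of_ne hST (by rintro rfl; exact hSab (hT.reachable a b)))
  have := card_le_numComponents_add_card (ends := ends) (insert f S)
  have := numComponents_le_one hspan
  have := card_insert_le f S
  have := hT.1
  exact ⟨S, hIS, hST, by omega, hspan⟩

theorem IsSpanningTree.card_filter_le_of_lex_minimal {T0 : Finset (Fin m)}
    (hT0 : IsSpanningTree ends T0)
    (hlex : ∀ T, IsSpanningTree ends T → T = T0 ∨
      List.Lex (· < ·) (T0.sort (· ≤ ·)) (T.sort (· ≤ ·)))
    (hT : IsSpanningTree ends T) (x : Fin m) :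
    #(T.filter (· ≤ x)) ≤ #(T0.filter (· ≤ x)) := by
  by_contra! hcard
  obtain ⟨f, hfJ, a, b, hf, hab⟩ :=
    hT.exists_edge_not_reachable_of_card_lt (filter_subset _ _) hcard
  obtain ⟨S, hIS, -, hB⟩ := hT0.exists_insert_isSpanningTree (filter_subset _ _) hf hab
  have hfx : f ≤ x := (mem_filter.1 hfJ).2
  have hfT0 : f ∉ T0 := fun h => hab (reachable_of_mem (mem_filter.2 ⟨h, hfx⟩) hf)
  rcases hlex _ hB with heq | hlt
  · exact hfT0 (heq ▸ mem_insert_self f S)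
  obtain ⟨d, hdT0, hdB, hdf⟩ :=
    exists_lt_of_lex_sort hlt (hB.card_eq hT0).le (mem_insert_self f S) hfT0
  exact hdB (mem_insert_of_mem (hIS (mem_filter.2 ⟨hdT0, (hdf.trans_le hfx).le⟩)))

end

/-- If `Q` is row graded and `T⁰` is the lexicographically smallest spanning tree, then `T⁰`
simultaneously minimizes every row-wise linear objective `∑_{j∈T} q i j` over all
spanning trees `T`. -/
theorem row_graded_lex_tree_solves_all_rows {V : Type*} [Fintype V] {m : ℕ}
    (ends : Fin m → Sym2 V) (Q : Fin m → Fin m → ℝ)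
    (hgrad : ∀ i, Monotone (Q i))
    (T0 : Finset (Fin m)) (hT0 : IsSpanningTree ends T0)
    (hlex : ∀ T, IsSpanningTree ends T → T = T0 ∨
      List.Lex (· < ·) (T0.sort (· ≤ ·)) (T.sort (· ≤ ·))) :
    ∀ i : Fin m, ∀ T, IsSpanningTree ends T →
      ∑ j ∈ T0, Q i j ≤ ∑ j ∈ T, Q i j := by
  intro i T hT
  exact sum_le_sum_of_card_filter_le (hgrad i) (hT0.card_eq hT)
    (hT0.card_filter_le_of_lex_minimal hlex hT)
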